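/- There exists a continuous function f on T whose Fourier series diverges at a point: the symmetric partial sums S_n(f)(0) = Σ_{k=−n}^{n} a_k(f) do not converge as n → ∞. -/

import Mathlib

open MeasureTheory Filter Real AddCircle

instance : Fact (0 < 2 * π) := ⟨Real.two_pi_pos⟩

/-!
The partial sum `S_n(f)(0)` is `∫ D_n f` for the Dirichlet kernel `D_n = ∑_{|k| ≤ n} e_k`.
As a functional on `C(T)` it has norm at least `‖D_n‖₁ - 1`: test it against
`conj D_n / (|D_n| + 1)`. From `sin (x/2) D_n(x) = sin ((n + 1/2) x)` one gets
`|D_n(x)| ≥ (1 - cos ((2n+1) x)) / |x|`, and integrating over the arcs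
`[2πk/(2n+1), 2π(k+1)/(2n+1)]`, on each of which `1 - cos ((2n+1) x)` has mean `1`, gives
`‖D_n‖₁ ≥ (2π)⁻¹ ∑_{k ≤ n} 1/k`, which is unbounded. If `S_n(f)(0)` converged for every
continuous `f`, the Banach–Steinhaus theorem would bound these norms uniformly.
-/

open scoped ComplexConjugate

section MulIntegral

variable {X : Type*} [TopologicalSpace X] [CompactSpace X] [MeasurableSpace X] [BorelSpace X]
  (μ : Measure X)

noncomputable def mulIntegralCLM [IsFiniteMeasure μ] (h : C(X, ℂ)) : C(X, ℂ) →L[ℂ] ℂ :=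
  L1.integralCLM' ℂ ∘L ContinuousMap.toLp 1 μ ℂ ∘L ContinuousLinearMap.mul ℂ C(X, ℂ) h

theorem mulIntegralCLM_apply [IsFiniteMeasure μ] (h f : C(X, ℂ)) :
    mulIntegralCLM μ h f = ∫ x, h x * f x ∂μ := by
  rw [mulIntegralCLM, ContinuousLinearMap.comp_apply, ContinuousLinearMap.comp_apply,
    ← L1.integral_eq', L1.integral_eq_integral]
  exact integral_congr_ae (ContinuousMap.coeFn_toLp μ _)

theorem integral_norm_sub_one_le_norm_mulIntegralCLM [IsProbabilityMeasure μ] (h : C(X, ℂ)) :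
    ∫ x, ‖h x‖ ∂μ - 1 ≤ ‖mulIntegralCLM μ h‖ := by
  have hpos : ∀ x, 0 < ‖h x‖ + 1 := fun x => by positivity
  let g : C(X, ℂ) :=
    ⟨fun x => conj (h x) / (‖h x‖ + 1 : ℝ), by
      have := h.continuous
      fun_prop (disch := exact fun x => Complex.ofReal_ne_zero.2 (hpos x).ne')⟩
  have hg : ‖g‖ ≤ 1 := by
    refine (ContinuousMap.norm_le _ zero_le_one).2 fun x => ?_
    simp only [g, ContinuousMap.coe_mk, norm_div, Complex.norm_conj, Complex.norm_real,
      Real.norm_of_nonneg (hpos x).le]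
    exact (div_le_one (hpos x)).2 (by linarith)
  have hcont : Continuous fun x => ‖h x‖ := h.continuous.norm
  have hint : ∀ {F : X → ℝ}, Continuous F → Integrable F μ := fun hF =>
    hF.integrable_of_hasCompactSupport (.of_compactSpace _)
  have hhg :
      mulIntegralCLM μ h g = ((∫ x, ‖h x‖ ^ 2 / (‖h x‖ + 1) ∂μ : ℝ) : ℂ) := by
    rw [mulIntegralCLM_apply, ← integral_complex_ofReal]
    refine integral_congr_ae (ae_of_all _ fun x => ?_)
    simp only [g, ContinuousMap.coe_mk, mul_div_assoc', Complex.mul_conj,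
      Complex.normSq_eq_norm_sq]
    push_cast
    rfl
  calc ∫ x, ‖h x‖ ∂μ - 1 = ∫ x, (‖h x‖ - 1) ∂μ := by
        rw [integral_sub (hint hcont) (integrable_const _), integral_const, probReal_univ,
          one_smul]
    _ ≤ ∫ x, ‖h x‖ ^ 2 / (‖h x‖ + 1) ∂μ := by
        refine integral_mono (hint (hcont.sub continuous_const))
          (hint ((hcont.pow 2).div (hcont.add continuous_const) fun x => (hpos x).ne'))
          fun x => ?_
        rw [le_div_iff₀ (hpos x)]
        nlinarith
    _ ≤ ‖mulIntegralCLM μ h g‖ := by rw [hhg, Complex.norm_real]; exact le_abs_self _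
    _ ≤ ‖mulIntegralCLM μ h‖ :=
        (ContinuousLinearMap.le_opNorm _ _).trans (mul_le_of_le_one_right (norm_nonneg _) hg)

end MulIntegral

namespace Finset

theorem sum_Icc_neg_comp_neg {M : Type*} [AddCommMonoid M] (n : ℕ) (f : ℤ → M) :
    ∑ k ∈ Icc (-n : ℤ) n, f (-k) = ∑ k ∈ Icc (-n : ℤ) n, f k :=
  sum_equiv (Equiv.neg ℤ) (fun k => by simp only [mem_Icc, Equiv.neg_apply]; omega)
    (fun _ _ => rfl)

theorem sum_Icc_neg_succ {M : Type*} [AddCommMonoid M] (n : ℕ) (f : ℤ → M) :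
    ∑ k ∈ Icc (-(n + 1 : ℕ) : ℤ) (n + 1 : ℕ), f k
      = ∑ k ∈ Icc (-n : ℤ) n, f k + f (n + 1) + f (-(n + 1)) := by
  have : Icc (-(n + 1 : ℕ) : ℤ) (n + 1 : ℕ)
      = insert (-(n + 1 : ℤ)) (insert (n + 1 : ℤ) (Icc (-n : ℤ) n)) := by
    ext k; simp only [mem_Icc, mem_insert]; omega
  rw [this, sum_insert (by simp only [mem_Icc, mem_insert]; omega), sum_insert (by simp),
    add_comm, add_comm (f _)]

end Finset

section DirichletKernel

variable (T : ℝ) [Fact (0 < T)]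

noncomputable def dirichletKernel (n : ℕ) : C(AddCircle T, ℂ) :=
  ∑ k ∈ Finset.Icc (-n : ℤ) n, fourier k

theorem sum_fourierCoeff_eq_integral_dirichletKernel_mul (f : C(AddCircle T, ℂ)) (n : ℕ) :
    ∑ k ∈ Finset.Icc (-n : ℤ) n, fourierCoeff f k
      = ∫ t, dirichletKernel T n t * f t ∂haarAddCircle := by
  simp only [fourierCoeff, dirichletKernel, ContinuousMap.coe_sum, Finset.sum_apply,
    Finset.sum_mul, smul_eq_mul]
  rw [← integral_finsetSum _ fun k _ =>
    (by fun_prop : Continuous fun t => fourier (-k) t * f t).integrable_of_hasCompactSupport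
      (.of_compactSpace _)]
  congr 1 with t
  exact Finset.sum_Icc_neg_comp_neg n fun k => fourier k t * f t

end DirichletKernel

theorem fourier_coe_two_pi (k : ℤ) (x : ℝ) :
    fourier k (x : AddCircle (2 * π)) = Complex.exp (k * x * Complex.I) := by
  rw [fourier_coe_apply]
  congr 1
  field_simp
  push_cast
  ring

theorem sin_mul_dirichletKernel_coe (n : ℕ) (x : ℝ) :
    (Real.sin (x / 2) : ℂ) * dirichletKernel (2 * π) n x = Real.sin ((n + 1 / 2) * x) := by
  push_cast
  induction n with
  | zero =>
    simp only [dirichletKernel, Nat.cast_zero, neg_zero, Finset.Icc_self, Finset.sum_singleton,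
      fourier_zero, mul_one, zero_add]
    ring_nf
  | succ n ih =>
    simp only [dirichletKernel, ContinuousMap.coe_sum, Finset.sum_apply] at ih ⊢
    have hcos : fourier (n + 1 : ℤ) (x : AddCircle (2 * π))
        + fourier (-(n + 1) : ℤ) (x : AddCircle (2 * π)) = 2 * Complex.cos ((n + 1) * x) := by
      rw [Complex.two_cos, fourier_coe_two_pi, fourier_coe_two_pi]
      push_cast
      ring_nf
    have hadd := Complex.sin_add ((n + 1) * x) (x / 2)
    have hsub := Complex.sin_sub ((n + 1) * x) (x / 2)
    rw [Finset.sum_Icc_neg_succ, add_assoc, mul_add, ih, hcos]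
    push_cast
    ring_nf at hadd hsub ⊢
    linear_combination hsub - hadd

theorem one_sub_cos_le_abs_mul_norm_dirichletKernel (n : ℕ) (x : ℝ) :
    1 - Real.cos ((2 * n + 1) * x) ≤ |x| * ‖dirichletKernel (2 * π) n x‖ := by
  have hnorm : |Real.sin (x / 2)| * ‖dirichletKernel (2 * π) n x‖
      = |Real.sin ((n + 1 / 2) * x)| := by
    simpa only [norm_mul, Complex.norm_real, Real.norm_eq_abs]
      using congrArg norm (sin_mul_dirichletKernel_coe n x)
  have hcos : Real.cos ((2 * n + 1) * x) = 1 - 2 * Real.sin ((n + 1 / 2) * x) ^ 2 := by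
    rw [show (2 * n + 1) * x = 2 * ((n + 1 / 2) * x) by ring, Real.cos_two_mul, Real.cos_sq']
    ring
  have hsin_half : |Real.sin (x / 2)| ≤ |x| / 2 := by
    simpa [abs_div] using Real.abs_sin_le_abs (x := x / 2)
  have hsq : Real.sin ((n + 1 / 2) * x) ^ 2 ≤ |Real.sin ((n + 1 / 2) * x)| := by
    rw [← sq_abs]
    nlinarith [abs_nonneg (Real.sin ((n + 1 / 2) * x)), Real.abs_sin_le_one ((n + 1 / 2) * x)]
  rw [hcos]
  nlinarith [norm_nonneg (dirichletKernel (2 * π) n x)]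

theorem continuous_norm_dirichletKernel_coe (n : ℕ) :
    Continuous fun x : ℝ => ‖dirichletKernel (2 * π) n x‖ := by
  fun_prop

theorem integral_one_sub_cos_mul_eq {m : ℝ} (hm : m ≠ 0) (k : ℕ) :
    ∫ x in 2 * π * k / m..2 * π * (k + 1 : ℕ) / m, (1 - Real.cos (m * x)) = 2 * π / m := by
  have hsin : ∀ j : ℕ, Real.sin (m * (2 * π * j / m)) = 0 := fun j => by
    rw [show m * (2 * π * j / m) = (2 * j : ℕ) * π by field_simp; push_cast; ring]
    exact Real.sin_nat_mul_pi _
  rw [intervalIntegral.integral_sub intervalIntegrable_const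
      ((by fun_prop : Continuous fun x => Real.cos (m * x)).intervalIntegrable _ _),
    intervalIntegral.integral_comp_mul_left (fun x => Real.cos x) hm, integral_cos,
    intervalIntegral.integral_const, hsin, hsin, sub_self, smul_zero, sub_zero, smul_eq_mul,
    mul_one]
  push_cast
  field_simp
  ring

theorem one_div_succ_le_integral_norm_dirichletKernel (n k : ℕ) :
    1 / (k + 1 : ℝ) ≤ ∫ x in 2 * π * k / (2 * n + 1)..2 * π * (k + 1 : ℕ) / (2 * n + 1),
      ‖dirichletKernel (2 * π) n x‖ := by
  set m : ℝ := 2 * n + 1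
  have hm : 0 < m := by positivity
  have hab : 2 * π * k / m ≤ 2 * π * (k + 1 : ℕ) / m := by gcongr; simp
  set b : ℝ := 2 * π * (k + 1 : ℕ) / m
  have hb : 0 < b := by positivity
  calc 1 / (k + 1 : ℝ) = ∫ x in 2 * π * k / m..b, (1 - Real.cos (m * x)) / b := by
        rw [intervalIntegral.integral_div, integral_one_sub_cos_mul_eq hm.ne']
        simp only [b]
        push_cast
        field_simp
    _ ≤ ∫ x in 2 * π * k / m..b, ‖dirichletKernel (2 * π) n x‖ := by
        refine intervalIntegral.integral_mono_on hab
          ((by fun_prop : Continuous fun x => (1 - Real.cos (m * x)) / b).intervalIntegrable _ _)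
          ((continuous_norm_dirichletKernel_coe n).intervalIntegrable _ _)
          fun x hx => ?_
        have hx0 : 0 ≤ x := (by positivity : 0 ≤ 2 * π * k / m).trans hx.1
        rw [div_le_iff₀ hb]
        calc 1 - Real.cos (m * x) ≤ |x| * ‖dirichletKernel (2 * π) n x‖ :=
              one_sub_cos_le_abs_mul_norm_dirichletKernel n x
          _ ≤ ‖dirichletKernel (2 * π) n x‖ * b := by
              rw [abs_of_nonneg hx0, mul_comm]; gcongr; exact hx.2

theorem sum_range_one_div_le_integral_norm_dirichletKernel (n : ℕ) :
    ∑ k ∈ Finset.range n, 1 / (k + 1 : ℝ)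
      ≤ ∫ x in 0..2 * π, ‖dirichletKernel (2 * π) n x‖ := by
  have hcont := continuous_norm_dirichletKernel_coe n
  set a : ℕ → ℝ := fun k => 2 * π * k / (2 * n + 1)
  calc ∑ k ∈ Finset.range n, 1 / (k + 1 : ℝ)
      ≤ ∑ k ∈ Finset.range n, ∫ x in a k..a (k + 1), ‖dirichletKernel (2 * π) n x‖ :=
        Finset.sum_le_sum fun k _ => one_div_succ_le_integral_norm_dirichletKernel n k
    _ = ∫ x in a 0..a n, ‖dirichletKernel (2 * π) n x‖ :=
        intervalIntegral.sum_integral_adjacent_intervals fun k _ => hcont.intervalIntegrable _ _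
    _ ≤ ∫ x in 0..2 * π, ‖dirichletKernel (2 * π) n x‖ := by
        refine intervalIntegral.integral_mono_interval (by simp [a])
          (by simp only [a]; gcongr; simp) ?_ (ae_of_all _ fun x => norm_nonneg _)
          (hcont.intervalIntegrable _ _)
        rw [div_le_iff₀ (by positivity)]
        nlinarith [Real.pi_pos]

theorem tendsto_integral_norm_dirichletKernel_atTop :
    Tendsto (fun n => ∫ t, ‖dirichletKernel (2 * π) n t‖ ∂haarAddCircle) atTop atTop := by
  have hperiod : ∀ n, ∫ t, ‖dirichletKernel (2 * π) n t‖ ∂haarAddCircle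
      = (2 * π)⁻¹ * ∫ x in 0..2 * π, ‖dirichletKernel (2 * π) n x‖ := fun n => by
    have hlift :=
      AddCircle.intervalIntegral_preimage (2 * π) 0 fun t => ‖dirichletKernel (2 * π) n t‖
    rw [zero_add] at hlift
    rw [integral_haarAddCircle, smul_eq_mul, hlift]
  refine tendsto_atTop_mono (fun n => ?_)
    (Real.tendsto_sum_range_one_div_nat_succ_atTop.const_mul_atTop
      (by positivity : 0 < (2 * π)⁻¹))
  rw [hperiod]
  gcongr
  exact sum_range_one_div_le_integral_norm_dirichletKernel n

/-- There is a continuous function on the circle `T = ℝ/2πℤ` whose Fourier series diverges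
at a point: the symmetric partial sums `S_n(f)(0) = ∑_{k=-n}^{n} a_k(f)` do not converge. -/
theorem exists_continuous_divergent_fourierSeries :
    ∃ f : C(AddCircle (2 * π), ℂ),
      ¬ ∃ L : ℂ, Tendsto
        (fun n : ℕ => ∑ k ∈ Finset.Icc (-(n : ℤ)) (n : ℤ), fourierCoeff (⇑f) k)
        atTop (nhds L) := by
  by_contra! hconv
  let Λ : ℕ → C(AddCircle (2 * π), ℂ) →L[ℂ] ℂ := fun n =>
    mulIntegralCLM haarAddCircle (dirichletKernel (2 * π) n)
  have hbdd : ∀ f, ∃ C, ∀ n, ‖Λ n f‖ ≤ C := fun f => by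
    obtain ⟨L, hL⟩ := hconv f
    simp only [Λ, mulIntegralCLM_apply, ← sum_fourierCoeff_eq_integral_dirichletKernel_mul]
    obtain ⟨C, hC⟩ := hL.norm.bddAbove_range
    exact ⟨C, fun n => hC ⟨n, rfl⟩⟩
  obtain ⟨C, hC⟩ := banach_steinhaus hbdd
  obtain ⟨n, hn⟩ :=
    (tendsto_integral_norm_dirichletKernel_atTop.eventually_gt_atTop (C + 1)).exists
  linarith [integral_norm_sub_one_le_norm_mulIntegralCLM haarAddCircle (dirichletKernel (2 * π) n),
    hC n]
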